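/- arXiv:2511.06003 — 2 statements merged into one kernel-verified Lean document; each statement's English description precedes it below -/
import Mathlib

section
/- In Wang's colluding PIR with messages of length S − T over 𝔽_S, the download rate (S−T)/(S−1+(1−S^{−M(S−T)})) = (1 − T/S)/(1 − S^{−(M(S−T)+1)}) is strictly less than the colluding PIR capacity (1 − T/S)/(1 − (T/S)^M), for all integers S ≥ 2, 1 ≤ T < S, M ≥ 2. -/
/-- Wang's colluding PIR rate `(1 - T/S)/(1 - S^{-(M(S-T)+1)})` is strictly smaller
than the colluding PIR capacity `(1 - T/S)/(1 - (T/S)^M)`, for all integers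
`S ≥ 2`, `1 ≤ T < S`, `M ≥ 2`. -/
theorem wang_rate_lt_colluding_capacity
    (S T M : ℕ) (hS : 2 ≤ S) (hT : 1 ≤ T) (hTS : T < S) (hM : 2 ≤ M) :
    (1 - (T : ℝ) / S) / (1 - 1 / (S : ℝ) ^ (M * (S - T) + 1))
      < (1 - (T : ℝ) / S) / (1 - ((T : ℝ) / S) ^ M) := by
  have hS1 : (1:ℝ) < S := by exact_mod_cast Nat.lt_of_lt_of_le Nat.one_lt_two hS
  have hSpos : (0:ℝ) < S := lt_trans one_pos hS1
  have hTpos : (0:ℝ) < T := by exact_mod_cast hT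
  have hTS' : (T:ℝ) < S := by exact_mod_cast hTS
  have hratio : (T:ℝ) / S < 1 := (div_lt_one hSpos).mpr hTS'
  have hratio_pos : 0 < (T:ℝ) / S := div_pos hTpos hSpos
  have hnum : 0 < 1 - (T:ℝ) / S := by linarith
  -- key: 1/S^{M(S-T)+1} < (T/S)^M
  have hexp : M < M * (S - T) + 1 := by
    have h1 : 1 ≤ S - T := Nat.le_sub_of_add_le (by omega)
    calc M ≤ M * (S - T) := Nat.le_mul_of_pos_right M (by omega)
      _ < M * (S - T) + 1 := Nat.lt_succ_self _
  have hpow : (S:ℝ) ^ M < (S:ℝ) ^ (M * (S - T) + 1) :=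
    pow_lt_pow_right₀ hS1 hexp
  have hstep1 : 1 / (S:ℝ) ^ (M * (S - T) + 1) < 1 / (S:ℝ) ^ M :=
    one_div_lt_one_div_of_lt (pow_pos hSpos M) hpow
  have hstep2 : 1 / (S:ℝ) ^ M ≤ ((T:ℝ) / S) ^ M := by
    rw [← one_div_pow]
    exact pow_le_pow_left₀ (by positivity) (by
      apply div_le_div_of_nonneg_right ?_ hSpos.le |>.trans_eq rfl
      exact_mod_cast hT) M
  have hkey : 1 / (S:ℝ) ^ (M * (S - T) + 1) < ((T:ℝ) / S) ^ M :=
    lt_of_lt_of_le hstep1 hstep2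
  have hd2 : 0 < 1 - ((T:ℝ) / S) ^ M := by
    have := pow_lt_one₀ (le_of_lt hratio_pos) hratio (by omega : M ≠ 0)
    linarith
  exact div_lt_div_of_pos_left hnum hd2 (by linarith)
end

section
/- Let Q be a stacked query matrix over 𝔽 with M column blocks and let ℐ̄ ⊆ [1:M]\{m} with complement ℐ. If for all i ≠ j the row spaces of Q_i[ℐ] and Q_j[ℐ] intersect trivially pairwise and jointly (rank Q₁:S[ℐ] = Σ_j rank Q_j[ℐ]), then for messages with W_{ℐ̄} known, the responses X₁,…,X_S (as random variables in the uniform message model over 𝔽_q) are such that no response X_j is a deterministic function of another response X_i together with W_{ℐ̄}, unless Q_j[ℐ] = 0; formally, for any matrices A, B with X_j = A·X_i + B·W_{ℐ̄} for all messages, it must be that Q_j[ℐ] = A·Q_i[ℐ] and rank condition forces Q_j[ℐ]'s rows to lie in the row space of Q_i[ℐ], hence Q_j[ℐ] = 0. -/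
/-!
Taking `W_{ℐ̄} = 0` in the functional relation shows `Q_j[ℐ] = A · Q_i[ℐ]`, so the row space of
`Q_j[ℐ]` lies inside that of `Q_i[ℐ]`. The row space of the stacked matrix is the sum of the
individual row spaces, and the rank hypothesis says this sum is as large as the sum of their
dimensions; a summand contained in another summand can then only be zero.
-/

open Matrix Module

namespace Submodule

variable {K V ι : Type*} [Field K] [AddCommGroup V] [Module K V] [FiniteDimensional K V]

theorem finrank_finset_sup_le_sum (U : ι → Submodule K V) (s : Finset ι) :
    finrank K ↥(s.sup U) ≤ ∑ k ∈ s, finrank K (U k) := by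
  classical
  induction s using Finset.induction_on with
  | empty => simp
  | insert a s ha ih =>
    rw [Finset.sup_insert, Finset.sum_insert ha]
    exact (finrank_add_le_finrank_add_finrank _ _).trans (Nat.add_le_add_left ih _)

theorem eq_bot_of_le_of_finrank_iSup_eq_sum [Fintype ι] [DecidableEq ι] {U : ι → Submodule K V}
    (hU : finrank K ↥(⨆ k, U k) = ∑ k, finrank K (U k)) {i j : ι} (hij : i ≠ j)
    (hle : U j ≤ U i) : U j = ⊥ := by
  have hsup : (⨆ k, U k) = (Finset.univ.erase j).sup U := by
    refine le_antisymm (iSup_le fun k => ?_) (Finset.sup_le fun k _ => le_iSup U k)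
    rcases eq_or_ne k j with rfl | hk
    · exact hle.trans (Finset.le_sup (Finset.mem_erase.2 ⟨hij, Finset.mem_univ i⟩))
    · exact Finset.le_sup (Finset.mem_erase.2 ⟨hk, Finset.mem_univ k⟩)
  have hle_sum := finrank_finset_sup_le_sum U (Finset.univ.erase j)
  rw [← hsup, hU, ← Finset.add_sum_erase _ _ (Finset.mem_univ j)] at hle_sum
  exact finrank_eq_zero.mp (by omega)

end Submodule

namespace Matrix

variable {K ι l m n : Type*} [Field K]

theorem span_row_of_prod (Q : ι → Matrix m n K) :
    Submodule.span K (Set.range (of fun (p : ι × m) c => Q p.1 p.2 c).row)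
      = ⨆ k, Submodule.span K (Set.range (Q k).row) := by
  rw [← Submodule.span_iUnion]
  congr 1
  ext v
  simp only [Set.mem_range, Set.mem_iUnion]
  exact ⟨fun ⟨p, hp⟩ => ⟨p.1, p.2, hp⟩, fun ⟨k, a, ha⟩ => ⟨(k, a), ha⟩⟩

theorem span_row_mul_le [Fintype l] [Fintype m] (A : Matrix l m K) (B : Matrix m n K) :
    Submodule.span K (Set.range (A * B).row) ≤ Submodule.span K (Set.range B.row) := by
  rw [← range_vecMulLinear, ← range_vecMulLinear]
  rintro _ ⟨v, rfl⟩
  exact ⟨v ᵥ* A, by simp [vecMul_vecMul]⟩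

theorem eq_zero_of_span_row_eq_bot {A : Matrix m n K}
    (h : Submodule.span K (Set.range A.row) = ⊥) : A = 0 := by
  ext i c
  exact congrFun ((Submodule.span_eq_bot.mp h) (A i) ⟨i, rfl⟩) c

theorem eq_mul_of_mulVec_add_eq [Fintype m] [Fintype n] [Fintype l] {P R : Matrix m n K}
    {P' R' : Matrix m l K} {A : Matrix m m K} {B : Matrix m l K}
    (h : ∀ x y, P *ᵥ x + P' *ᵥ y = A *ᵥ (R *ᵥ x + R' *ᵥ y) + B *ᵥ y) : P = A * R :=
  ext_iff_mulVec.2 fun x => by simpa [mulVec_mulVec] using h x 0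

end Matrix

theorem capacity_block_independence_general
    {𝔽 : Type*} [Field 𝔽] (S r M L : ℕ)
    (IB : Finset (Fin M))
    (QI : Fin S → Matrix (Fin r) {c : Fin M × Fin L // c.1 ∉ IB} 𝔽)
    (QIb : Fin S → Matrix (Fin r) {c : Fin M × Fin L // c.1 ∈ IB} 𝔽)
    (hrank : (Matrix.of fun (p : Fin S × Fin r) c => QI p.1 p.2 c).rank
      = ∑ j : Fin S, (QI j).rank) :
    ∀ i j : Fin S, i ≠ j →
      ∀ (A : Matrix (Fin r) (Fin r) 𝔽)
        (B : Matrix (Fin r) {c : Fin M × Fin L // c.1 ∈ IB} 𝔽),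
      (∀ (WI : {c : Fin M × Fin L // c.1 ∉ IB} → 𝔽)
         (WIb : {c : Fin M × Fin L // c.1 ∈ IB} → 𝔽),
        (QI j).mulVec WI + (QIb j).mulVec WIb
          = A.mulVec ((QI i).mulVec WI + (QIb i).mulVec WIb) + B.mulVec WIb) →
      QI j = A * QI i ∧ QI j = 0 := by
  intro i j hij A B hfun
  have hAQ : QI j = A * QI i := eq_mul_of_mulVec_add_eq hfun
  refine ⟨hAQ, eq_zero_of_span_row_eq_bot <| Submodule.eq_bot_of_le_of_finrank_iSup_eq_sum
    (U := fun k => Submodule.span 𝔽 (Set.range (QI k).row)) ?_ hij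
    (hAQ ▸ span_row_mul_le A (QI i))⟩
  rw [← span_row_of_prod, ← rank_eq_finrank_span_row, hrank]
  simp only [rank_eq_finrank_span_row]

/-- If the stacked query blocks `Q_j[ℐ]` have jointly independent row spaces
(`rank Q₁:S[ℐ] = Σ_j rank Q_j[ℐ]`), then no response `X_j` can be a deterministic
linear function of another response `X_i` together with `W_{ℐ̄}` unless
`Q_j[ℐ] = 0`: any matrices `A, B` with
`X_j = A·X_i + B·W_{ℐ̄}` for all messages force `Q_j[ℐ] = A·Q_i[ℐ]` and hence
`Q_j[ℐ] = 0`. -/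
theorem capacity_block_independence
    {𝔽 : Type*} [Field 𝔽] (S r M L : ℕ) (m : Fin M)
    (Q : Fin S → Matrix (Fin r) (Fin M × Fin L) 𝔽)
    (IB : Finset (Fin M)) (hm : m ∉ IB)
    (QI : Fin S → Matrix (Fin r) {c : Fin M × Fin L // c.1 ∉ IB} 𝔽)
    (QIb : Fin S → Matrix (Fin r) {c : Fin M × Fin L // c.1 ∈ IB} 𝔽)
    (hQI : ∀ j, QI j = (Q j).submatrix id Subtype.val)
    (hQIb : ∀ j, QIb j = (Q j).submatrix id Subtype.val)
    (hrank : (Matrix.of fun (p : Fin S × Fin r) c => QI p.1 p.2 c).rank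
      = ∑ j : Fin S, (QI j).rank) :
    ∀ i j : Fin S, i ≠ j →
      ∀ (A : Matrix (Fin r) (Fin r) 𝔽)
        (B : Matrix (Fin r) {c : Fin M × Fin L // c.1 ∈ IB} 𝔽),
      (∀ (WI : {c : Fin M × Fin L // c.1 ∉ IB} → 𝔽)
         (WIb : {c : Fin M × Fin L // c.1 ∈ IB} → 𝔽),
        (QI j).mulVec WI + (QIb j).mulVec WIb
          = A.mulVec ((QI i).mulVec WI + (QIb i).mulVec WIb) + B.mulVec WIb) →
      QI j = A * QI i ∧ QI j = 0 :=
  capacity_block_independence_general S r M L IB QI QIb hrank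
end
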